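/- The defining relations of the odd nonlocal variable r over the ℓ*-covering of KdV are compatible: in the algebra R~ one has D_t(u₁·p₀) = D_x(u₁·p₂ − u₂·p₁ + (u·u₁ + u₃)·p₀). -/
import Mathlib


/-!
STATEMENT 6: The defining relations of the odd nonlocal variable `r` over the
`ℓ*`-covering of KdV are compatible: in the algebra `R~` one has
`D_t(u₁·p₀) = D_x(u₁·p₂ − u₂·p₁ + (u·u₁ + u₃)·p₀)`.

`R~` is the polynomial algebra `ℚ[u₀,u₁,…,p₀,p₁,…]` with `D_x(u_k) = u_{k+1}`,
`D_x(p_k) = p_{k+1}`, `D_t(u_k) = D_x^k(u₃ + u·u₁)` and `D_t(p_k) = D_x^k(p₃ + u·p₁)`.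
-/

open MvPolynomial

noncomputable section

/-- The algebra `R~ = ℚ[u₀,u₁,…,p₀,p₁,…]`; `X (.inl k)` is `u_k`, `X (.inr k)` is `p_k`. -/
abbrev CovRing : Type := MvPolynomial (ℕ ⊕ ℕ) ℚ

/-- The jet variable `u_k`. -/
def uu (k : ℕ) : CovRing := X (Sum.inl k)

/-- The odd fibre variable `p_k` of the `ℓ*`-covering (modeled as a commuting variable,
since all expressions here are linear in the `p`'s). -/
def pp (k : ℕ) : CovRing := X (Sum.inr k)

/-- The total derivative `D_x` on `R~`: `D_x(u_k) = u_{k+1}`, `D_x(p_k) = p_{k+1}`. -/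
def Dx : Derivation ℚ CovRing CovRing :=
  mkDerivation ℚ fun i =>
    match i with
    | Sum.inl k => uu (k + 1)
    | Sum.inr k => pp (k + 1)

/-- The total derivative `D_t` on `R~`: `D_t(u_k) = D_x^k(u₃ + u·u₁)`,
`D_t(p_k) = D_x^k(p₃ + u·p₁)`. -/
def Dt : Derivation ℚ CovRing CovRing :=
  mkDerivation ℚ fun i =>
    match i with
    | Sum.inl k => (⇑Dx)^[k] (uu 3 + uu 0 * uu 1)
    | Sum.inr k => (⇑Dx)^[k] (pp 3 + uu 0 * pp 1)


lemma Dx_uu (k : ℕ) : Dx (uu k) = uu (k + 1) := by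
  simp [Dx, uu, mkDerivation_X]

lemma Dx_pp (k : ℕ) : Dx (pp k) = pp (k + 1) := by
  simp [Dx, pp, mkDerivation_X]

lemma Dt_uu (k : ℕ) : Dt (uu k) = (⇑Dx)^[k] (uu 3 + uu 0 * uu 1) := by
  simp [Dt, uu, mkDerivation_X]

lemma Dt_pp (k : ℕ) : Dt (pp k) = (⇑Dx)^[k] (pp 3 + uu 0 * pp 1) := by
  simp [Dt, pp, mkDerivation_X]

/-- Compatibility of the defining relations of the odd nonlocal variable `r`:
`D_t(u₁·p₀) = D_x(u₁·p₂ − u₂·p₁ + (u·u₁ + u₃)·p₀)`. -/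
theorem kdv_nonlocal_r_compatible :
    Dt (uu 1 * pp 0) = Dx (uu 1 * pp 2 - uu 2 * pp 1 + (uu 0 * uu 1 + uu 3) * pp 0) := by
  simp only [Derivation.leibniz, Dt_uu, Dt_pp, map_add, map_sub, map_mul, Dx_uu, Dx_pp,
    Function.iterate_succ, Function.iterate_zero, Function.comp_apply, id_eq,
    Derivation.leibniz, smul_eq_mul]
  ring
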